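/- For every n ∈ ℕ, every unfold i : A → A ∪ {v} has the left lifting property with respect to the constant graph map p_n : L_n → I_0: for all graph maps f : A → L_n and g : A ∪ {v} → I_0 with p_n∘f = g∘i, there exists a graph map F : A ∪ {v} → L_n with F∘i = f and p_n∘F = g. -/

import Mathlib

/-- A graph: vertex type `V` with a symmetric adjacency relation; loops are allowed. -/
structure LoopedGraph (V : Type) : Type where
  adj : V → V → Prop
  symm : ∀ {x y : V}, adj x y → adj y x

/-- A graph map: a vertex function preserving edges. -/
def IsGraphHom {V W : Type} (G : LoopedGraph V) (H : LoopedGraph W) (f : V → W) : Prop :=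
  ∀ ⦃x y : V⦄, G.adj x y → H.adj (f x) (f y)

/-- The categorical product of graphs. -/
def LoopedGraph.prod {V W : Type} (G : LoopedGraph V) (H : LoopedGraph W) : LoopedGraph (V × W) where
  adj p q := G.adj p.1 q.1 ∧ H.adj p.2 q.2
  symm h := ⟨G.symm h.1, H.symm h.2⟩

/-- The graph `I_n` on vertices `{0,…,n}` with `i ~ j` iff `|i-j| ≤ 1` (all vertices looped). -/
def pathI (n : ℕ) : LoopedGraph (Fin (n + 1)) where
  adj i j := (i : ℕ) ≤ (j : ℕ) + 1 ∧ (j : ℕ) ≤ (i : ℕ) + 1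
  symm h := ⟨h.2, h.1⟩

/-- `f` and `g` are ×-homotopic. -/
def Homotopic {V W : Type} (G : LoopedGraph V) (H : LoopedGraph W) (f g : V → W) : Prop :=
  ∃ (n : ℕ) (F : V × Fin (n + 1) → W),
    IsGraphHom (G.prod (pathI n)) H F ∧ (∀ a, F (a, 0) = f a) ∧ (∀ a, F (a, Fin.last n) = g a)

/-- `f` is a ×-homotopy equivalence. -/
def IsHtpyEquiv {V W : Type} (G : LoopedGraph V) (H : LoopedGraph W) (f : V → W) : Prop :=
  IsGraphHom G H f ∧ ∃ g : W → V, IsGraphHom H G g ∧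
    Homotopic G G (g ∘ f) id ∧ Homotopic H H (f ∘ g) id

/-- A graph is connected if any two vertices are joined by a path of edges. -/
def LoopedGraph.Connected {V : Type} (G : LoopedGraph V) : Prop :=
  ∀ x y : V, Relation.ReflTransGen G.adj x y

/-- `i : A → B` is an unfold: an induced-subgraph inclusion adding exactly one new vertex `v`
with `N(v) ⊆ N(i v')` for some vertex `v'` of `A`. -/
def IsUnfold {A B : Type} (GA : LoopedGraph A) (GB : LoopedGraph B) (i : A → B) : Prop :=
  Function.Injective i ∧ (∀ x y : A, GA.adj x y ↔ GB.adj (i x) (i y)) ∧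
  ∃ v : B, v ∉ Set.range i ∧ (∀ b : B, b ∉ Set.range i → b = v) ∧
    ∃ v' : A, ∀ b : B, GB.adj v b → GB.adj (i v') b

/-- Relation generating the pushout of `i : A → B` along `f : A → C`. -/
def pushoutRel {A B C : Type} (i : A → B) (f : A → C) : B ⊕ C → B ⊕ C → Prop :=
  fun x y => ∃ a : A, x = Sum.inl (i a) ∧ y = Sum.inr (f a)

/-- Vertex set of the pushout. -/
def Pushout {A B C : Type} (i : A → B) (f : A → C) : Type :=
  Quot (pushoutRel i f)

/-- Adjacency on a disjoint union. -/
def sumAdj {B C : Type} (GB : LoopedGraph B) (GC : LoopedGraph C) (x y : B ⊕ C) : Prop :=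
  (∃ b b', x = Sum.inl b ∧ y = Sum.inl b' ∧ GB.adj b b') ∨
  (∃ c c', x = Sum.inr c ∧ y = Sum.inr c' ∧ GC.adj c c')

/-- The pushout graph of `i : A → B` along `f : A → C`: classes are adjacent iff some
representatives are adjacent in `B` or in `C`. -/
def pushoutGraph {A B C : Type} (GB : LoopedGraph B) (GC : LoopedGraph C) (i : A → B) (f : A → C) :
    LoopedGraph (Pushout i f) where
  adj x y := ∃ u v : B ⊕ C,
    Quot.mk (pushoutRel i f) u = x ∧ Quot.mk (pushoutRel i f) v = y ∧ sumAdj GB GC u v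
  symm := by
    rintro x y ⟨u, v, hu, hv, h⟩
    refine ⟨v, u, hv, hu, ?_⟩
    rcases h with ⟨b, b', rfl, rfl, hbb⟩ | ⟨c, c', rfl, rfl, hcc⟩
    · exact Or.inl ⟨b', b, rfl, rfl, GB.symm hbb⟩
    · exact Or.inr ⟨c', c, rfl, rfl, GC.symm hcc⟩

/-- The cobase change `C → B ⊔_A C` of `i` along `f`. -/
def cobase {A B C : Type} (i : A → B) (f : A → C) : C → Pushout i f :=
  fun c => Quot.mk (pushoutRel i f) (Sum.inr c)

/-- The map `a ↦ (a,0)` into the cylinder `A × I_n`. -/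
def cyl0 {A : Type} (n : ℕ) : A → A × Fin (n + 1) := fun a => (a, 0)

/-- The canonical map `(A × I_n) ⊔_i B → B × I_n`, induced by `(a,t) ↦ (i a, t)`, `b ↦ (b,0)`. -/
def cylJ {A B : Type} (i : A → B) (n : ℕ) : Pushout (cyl0 (A := A) n) i → B × Fin (n + 1) :=
  Quot.lift (Sum.elim (fun p => (i p.1, p.2)) (fun b => (b, (0 : Fin (n + 1)))))
    (by rintro x y ⟨a, rfl, rfl⟩; rfl)

/-- `i : A → B` has the homotopy extension property for homotopies of length `n`. -/
def HEP {A B : Type} (GA : LoopedGraph A) (GB : LoopedGraph B) (i : A → B) (n : ℕ) : Prop :=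
  ∀ (Z : Type) (GZ : LoopedGraph Z) (f : A → Z) (g : B → Z),
    IsGraphHom GA GZ f → IsGraphHom GB GZ g → (∀ a, g (i a) = f a) →
    ∀ F : A × Fin (n + 1) → Z, IsGraphHom (GA.prod (pathI n)) GZ F → (∀ a, F (a, 0) = f a) →
    ∃ G : B × Fin (n + 1) → Z, IsGraphHom (GB.prod (pathI n)) GZ G ∧
      (∀ b, G (b, 0) = g b) ∧ (∀ a t, G (i a, t) = F (a, t))

/-- `FoldsTo G S`: the graph `G` can be reduced by a finite sequence of folds to the
induced subgraph on the vertex set `S`. -/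
inductive FoldsTo {V : Type} (G : LoopedGraph V) : Set V → Prop
  | univ : FoldsTo G Set.univ
  | step {S : Set V} {v v' : V} : FoldsTo G S → v ∈ S → v' ∈ S → v ≠ v' →
      (∀ x ∈ S, G.adj v x → G.adj v' x) → FoldsTo G (S \ {v})

/-- `RelFoldsTo G A S`: `G` can be reduced to the induced subgraph on `S` by a finite
sequence of folds relative to `A` (never removing a vertex of `A`). -/
inductive RelFoldsTo {V : Type} (G : LoopedGraph V) (A : Set V) : Set V → Prop
  | univ : RelFoldsTo G A Set.univ
  | step {S : Set V} {v v' : V} : RelFoldsTo G A S → v ∈ S → v ∉ A → v' ∈ S → v ≠ v' →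
      (∀ x ∈ S, G.adj v x → G.adj v' x) → RelFoldsTo G A (S \ {v})

/-- `p : X → Y` has the right lifting property with respect to every unfold. -/
def RLPunfolds {X Y : Type} (GX : LoopedGraph X) (GY : LoopedGraph Y) (p : X → Y) : Prop :=
  ∀ (A B : Type) (GA : LoopedGraph A) (GB : LoopedGraph B) (i : A → B), IsUnfold GA GB i →
    ∀ (f : A → X) (g : B → Y), IsGraphHom GA GX f → IsGraphHom GB GY g →
      (∀ a, p (f a) = g (i a)) →
      ∃ h : B → X, IsGraphHom GB GX h ∧ (∀ a, h (i a) = f a) ∧ ∀ b, p (h b) = g b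

/-- The graph `L_n`: the path `0 - 1 - ⋯ - n` with a loop at `0`. -/
def Lgraph (t : ℕ) : LoopedGraph (Fin (t + 1)) where
  adj x y := ((x : ℕ) + 1 = (y : ℕ) ∨ (y : ℕ) + 1 = (x : ℕ)) ∨ ((x : ℕ) = 0 ∧ (y : ℕ) = 0)
  symm := by tauto

/-- The graph `I_0`: a single looped vertex. -/
def I0 : LoopedGraph Unit where
  adj _ _ := True
  symm h := h

/-- The constant graph map `p_n : L_n → I_0`. -/
def pL (n : ℕ) : Fin (n + 1) → Unit := fun _ => ()

/-- An object of the category of finite graphs. -/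
structure FinGraph : Type where
  n : ℕ
  G : LoopedGraph (Fin n)

/-- A class of morphisms in the category of finite graphs. -/
def MorClass : Type :=
  ∀ (A B : FinGraph), (Fin A.n → Fin B.n) → Prop

/-- `f : A → B` is a retract of `g : X → Y` in the arrow category. -/
def IsRetractOf (A B X Y : FinGraph) (f : Fin A.n → Fin B.n) (g : Fin X.n → Fin Y.n) : Prop :=
  ∃ (iA : Fin A.n → Fin X.n) (rA : Fin X.n → Fin A.n)
    (iB : Fin B.n → Fin Y.n) (rB : Fin Y.n → Fin B.n),
    IsGraphHom A.G X.G iA ∧ IsGraphHom X.G A.G rA ∧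
    IsGraphHom B.G Y.G iB ∧ IsGraphHom Y.G B.G rB ∧
    (∀ a, rA (iA a) = a) ∧ (∀ b, rB (iB b) = b) ∧
    (∀ a, g (iA a) = iB (f a)) ∧ (∀ x, f (rA x) = rB (g x))

/-- A class of morphisms is closed under retracts. -/
def RetractClosed (S : MorClass) : Prop :=
  ∀ (A B X Y : FinGraph) (f : Fin A.n → Fin B.n) (g : Fin X.n → Fin Y.n),
    IsGraphHom A.G B.G f → IsGraphHom X.G Y.G g →
    IsRetractOf A B X Y f g → S X Y g → S A B f

/-- `i` has the left lifting property with respect to `p` (in the category of finite graphs). -/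
def HasLift (A B X Y : FinGraph) (i : Fin A.n → Fin B.n) (p : Fin X.n → Fin Y.n) : Prop :=
  ∀ (f : Fin A.n → Fin X.n) (g : Fin B.n → Fin Y.n),
    IsGraphHom A.G X.G f → IsGraphHom B.G Y.G g → (∀ a, p (f a) = g (i a)) →
    ∃ h : Fin B.n → Fin X.n, IsGraphHom B.G X.G h ∧ (∀ a, h (i a) = f a) ∧ ∀ b, p (h b) = g b

/-- A model structure on the category of finite graphs: classes `W`, `Cof`, `Fib` of graph maps,
each closed under retracts, with two-out-of-three for `W`, the lifting axioms, and the two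
factorization axioms. -/
structure ModelStructure (W Cof Fib : MorClass) : Prop where
  w_hom : ∀ A B f, W A B f → IsGraphHom A.G B.G f
  c_hom : ∀ A B f, Cof A B f → IsGraphHom A.G B.G f
  f_hom : ∀ A B f, Fib A B f → IsGraphHom A.G B.G f
  w_retract : RetractClosed W
  c_retract : RetractClosed Cof
  f_retract : RetractClosed Fib
  two_of_three_comp : ∀ (A B D : FinGraph) (f : Fin A.n → Fin B.n) (g : Fin B.n → Fin D.n),
    IsGraphHom A.G B.G f → IsGraphHom B.G D.G g → W A B f → W B D g → W A D (g ∘ f)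
  two_of_three_right : ∀ (A B D : FinGraph) (f : Fin A.n → Fin B.n) (g : Fin B.n → Fin D.n),
    IsGraphHom A.G B.G f → IsGraphHom B.G D.G g → W A B f → W A D (g ∘ f) → W B D g
  two_of_three_left : ∀ (A B D : FinGraph) (f : Fin A.n → Fin B.n) (g : Fin B.n → Fin D.n),
    IsGraphHom A.G B.G f → IsGraphHom B.G D.G g → W B D g → W A D (g ∘ f) → W A B f
  lift_cw_f : ∀ (A B X Y : FinGraph) (i : Fin A.n → Fin B.n) (p : Fin X.n → Fin Y.n),
    Cof A B i → W A B i → Fib X Y p → HasLift A B X Y i p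
  lift_c_fw : ∀ (A B X Y : FinGraph) (i : Fin A.n → Fin B.n) (p : Fin X.n → Fin Y.n),
    Cof A B i → Fib X Y p → W X Y p → HasLift A B X Y i p
  fact_c_fw : ∀ (A B : FinGraph) (f : Fin A.n → Fin B.n), IsGraphHom A.G B.G f →
    ∃ (Z : FinGraph) (c : Fin A.n → Fin Z.n) (p : Fin Z.n → Fin B.n),
      Cof A Z c ∧ Fib Z B p ∧ W Z B p ∧ ∀ a, p (c a) = f a
  fact_cw_f : ∀ (A B : FinGraph) (f : Fin A.n → Fin B.n), IsGraphHom A.G B.G f →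
    ∃ (Z : FinGraph) (c : Fin A.n → Fin Z.n) (p : Fin Z.n → Fin B.n),
      Cof A Z c ∧ W A Z c ∧ Fib Z B p ∧ ∀ a, p (c a) = f a

/-- The class of ×-homotopy equivalences of finite graphs. -/
def Whe : MorClass := fun A B f => IsHtpyEquiv A.G B.G f

namespace IsUnfold

variable {A B : Type} {GA : LoopedGraph A} {GB : LoopedGraph B} {i : A → B}

/-- Fold the new vertex `v` onto `v'`: the result is a graph map because `N(b) ⊆ N(i (r b))`
for every vertex `b`. -/
theorem exists_retraction (hi : IsUnfold GA GB i) :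
    ∃ r : B → A, IsGraphHom GB GA r ∧ ∀ a, r (i a) = a := by
  classical
  obtain ⟨hinj, hind, v, -, huniq, v', hv'⟩ := hi
  let r : B → A := fun b => if h : b ∈ Set.range i then h.choose else v'
  have hri : ∀ a, r (i a) = a := fun a => by
    have h : i a ∈ Set.range i := ⟨a, rfl⟩
    simpa only [r, dif_pos h] using hinj h.choose_spec
  have hnbhd : ∀ b c, GB.adj b c → GB.adj (i (r b)) c := by
    intro b c hbc
    by_cases hb : b ∈ Set.range i
    · obtain ⟨a, rfl⟩ := hb
      rwa [hri]
    · obtain rfl := huniq b hb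
      simpa only [r, dif_neg hb] using hv' c hbc
  refine ⟨r, fun b c hbc => (hind _ _).2 ?_, hri⟩
  exact GB.symm (hnbhd c _ (GB.symm (hnbhd b c hbc)))

theorem exists_extension (hi : IsUnfold GA GB i) {X : Type} {GX : LoopedGraph X} {f : A → X}
    (hf : IsGraphHom GA GX f) : ∃ F : B → X, IsGraphHom GB GX F ∧ ∀ a, F (i a) = f a := by
  obtain ⟨r, hr, hri⟩ := hi.exists_retraction
  exact ⟨f ∘ r, fun _ _ h => hf (hr h), fun a => congrArg f (hri a)⟩

end IsUnfold

theorem stmt15_general (n : ℕ) {A B : Type} (GA : LoopedGraph A) (GB : LoopedGraph B) (i : A → B)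
    (hi : IsUnfold GA GB i)
    (f : A → Fin (n + 1)) (g : B → Unit)
    (hf : IsGraphHom GA (Lgraph n) f) :
    ∃ F : B → Fin (n + 1), IsGraphHom GB (Lgraph n) F ∧
      (∀ a, F (i a) = f a) ∧ ∀ b, pL n (F b) = g b := by
  obtain ⟨F, hF, hFi⟩ := hi.exists_extension hf
  exact ⟨F, hF, hFi, fun _ => rfl⟩

/-- every unfold has the left lifting property with respect to the constant
graph map `p_n : L_n → I_0`. -/
theorem stmt15 (n : ℕ) {A B : Type} (GA : LoopedGraph A) (GB : LoopedGraph B) (i : A → B)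
    (hi : IsUnfold GA GB i)
    (f : A → Fin (n + 1)) (g : B → Unit)
    (hf : IsGraphHom GA (Lgraph n) f) (hg : IsGraphHom GB I0 g)
    (hcomm : ∀ a, pL n (f a) = g (i a)) :
    ∃ F : B → Fin (n + 1), IsGraphHom GB (Lgraph n) F ∧
      (∀ a, F (i a) = f a) ∧ ∀ b, pL n (F b) = g b :=
  stmt15_general n GA GB i hi f g hf
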